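/- Let 1 < q < ∞ and γ > 0 with γ = k + t, k a nonnegative integer, 0 < t ≤ 1. Let {G_j} be a sequence in E^q_k such that for some point x₀ ∈ ℝⁿ the series Σ_j N_{q,γ}(G_j; x₀) is finite. Then: (i) the series Σ_j G_j converges in E^q_k (i.e. with respect to every seminorm ‖·‖_{q,Q}) to an element G, and N_{q,γ}(G; x₀) ≤ Σ_j N_{q,γ}(G_j; x₀); (ii) if g_j is the unique representative of G_j satisfying η_{q,γ}(g_j; x₀) = N_{q,γ}(G_j; x₀), then Σ_j g_j converges in L^q_loc(ℝⁿ) to a function g which is the unique representative of G satisfying η_{q,γ}(g; x₀) = N_{q,γ}(G; x₀). -/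

import Mathlib

open MeasureTheory ENNReal Filter Topology

noncomputable section

/-- Euclidean space `ℝⁿ`. -/
abbrev En (n : ℕ) : Type := EuclideanSpace ℝ (Fin n)

/-- The (closed) cube centered at `x` with side length `r`. -/
def cube {n : ℕ} (x : En n) (r : ℝ) : Set (En n) :=
  {y | ∀ i, |y i - x i| ≤ r / 2}

/-- The normalized `L^q` seminorm `|g|_{q,Q} = (|Q|⁻¹ ∫_Q |g|^q)^{1/q}` over a set `Q`. -/
def lqQ {n : ℕ} (q : ℝ) (g : En n → ℝ) (Q : Set (En n)) : ℝ≥0∞ :=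
  ((volume Q)⁻¹ * ∫⁻ y in Q, ENNReal.ofReal (|g y| ^ q)) ^ (1 / q)

/-- The Calderón maximal function `η_{q,γ}(g;x) = sup_{r>0} r^{-γ} |g|_{q,Q(x,r)}`. -/
def eta {n : ℕ} (q γ : ℝ) (g : En n → ℝ) (x : En n) : ℝ≥0∞ :=
  ⨆ (r : ℝ) (_ : 0 < r), ENNReal.ofReal (r ^ (-γ)) * lqQ q g (cube x r)

/-- `P` is (the function given by) a real polynomial on `ℝⁿ` of total degree at most `k`. -/
def IsPolyDegLe {n : ℕ} (k : ℕ) (P : En n → ℝ) : Prop :=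
  ∃ p : MvPolynomial (Fin n) ℝ, p.totalDegree ≤ k ∧
    ∀ x : En n, P x = MvPolynomial.eval (fun i => x i) p

/-- `g` belongs locally to `L^q` (on every cube). -/
def MemLqLoc {n : ℕ} (q : ℝ) (g : En n → ℝ) : Prop :=
  Measurable g ∧ ∀ (x : En n) (r : ℝ), 0 < r →
    ∫⁻ y in cube x r, ENNReal.ofReal (|g y| ^ q) < ⊤

/-- The maximal function `N_{q,γ}(G;x)` of the class `G` of `g` in `E^q_k`. -/
def Nmax {n : ℕ} (q γ : ℝ) (k : ℕ) (g : En n → ℝ) (x : En n) : ℝ≥0∞ :=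
  ⨅ P : {P : En n → ℝ // IsPolyDegLe k P}, eta q γ (fun y => g y - P.1 y) x

/-- The seminorm `‖G‖_{q,Q}` of the class `G` of `g` in `E^q_k`. -/
def qnormQ {n : ℕ} (q : ℝ) (k : ℕ) (g : En n → ℝ) (Q : Set (En n)) : ℝ≥0∞ :=
  ⨅ P : {P : En n → ℝ // IsPolyDegLe k P}, lqQ q (fun y => g y - P.1 y) Q

/-- A weight: nonnegative, locally integrable, positive a.e. -/
def IsWeight {n : ℕ} (w : En n → ℝ) : Prop :=
  Measurable w ∧ (∀ x, 0 ≤ w x) ∧ (∀ᵐ x ∂(volume : Measure (En n)), 0 < w x) ∧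
    LocallyIntegrable w volume

/-- `w(Q) = ∫_Q w`. -/
def wInt {n : ℕ} (w : En n → ℝ) (Q : Set (En n)) : ℝ≥0∞ :=
  ∫⁻ y in Q, ENNReal.ofReal (w y)

/-- The Muckenhoupt class `A_s`, `1 < s < ∞`. -/
def MuckA {n : ℕ} (s : ℝ) (w : En n → ℝ) : Prop :=
  ∃ C : ℝ≥0∞, C < ⊤ ∧ ∀ (x : En n) (r : ℝ), 0 < r →
    ((volume (cube x r))⁻¹ * wInt w (cube x r)) *
      ((volume (cube x r))⁻¹ *
        ∫⁻ y in cube x r, ENNReal.ofReal (w y) ^ (-(1 / (s - 1)))) ^ (s - 1) ≤ C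

/-- The class `A_∞ = ∪_{s} A_s`. -/
def MuckAinf {n : ℕ} (w : En n → ℝ) : Prop := ∃ s : ℝ, 1 < s ∧ MuckA s w

/-- The reverse Hölder class `RH_s`. -/
def RevHolder {n : ℕ} (s : ℝ) (w : En n → ℝ) : Prop :=
  ∃ C : ℝ≥0∞, C < ⊤ ∧ ∀ (x : En n) (r : ℝ), 0 < r →
    ((volume (cube x r))⁻¹ * ∫⁻ y in cube x r, ENNReal.ofReal (w y) ^ s) ^ (1 / s) ≤
      C * ((volume (cube x r))⁻¹ * wInt w (cube x r))

/-- The weighted Calderón–Hardy "norm" `‖G‖ = ‖N_{q,γ}(G;·)‖_{L^p(w)}` of the class of `g`. -/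
def chNorm {n : ℕ} (q γ : ℝ) (k : ℕ) (p : ℝ) (w : En n → ℝ) (g : En n → ℝ) : ℝ≥0∞ :=
  (∫⁻ x, Nmax q γ k g x ^ p * ENNReal.ofReal (w x)) ^ (1 / p)

/-- Directional derivative along the `i`-th coordinate. -/
def dirDeriv {n : ℕ} (i : Fin n) (f : En n → ℝ) : En n → ℝ :=
  fun x => fderiv ℝ f x (EuclideanSpace.single i 1)

/-- Iterated directional derivatives along a list of coordinates. -/
def pderivList {n : ℕ} : List (Fin n) → (En n → ℝ) → En n → ℝ
  | [], f => f
  | i :: L, f => dirDeriv i (pderivList L f)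

/-- The partial derivative `∂^β` for a multi-index `β`. -/
def pderivM {n : ℕ} (β : Fin n → ℕ) (f : En n → ℝ) : En n → ℝ :=
  pderivList ((List.finRange n).flatMap fun i => List.replicate (β i) i) f

/-- The Laplacian. -/
def lap {n : ℕ} (f : En n → ℝ) : En n → ℝ :=
  fun x => ∑ i, dirDeriv i (dirDeriv i f) x

/-- A Schwartz function (as a plain function). -/
def IsSchwartzFn {n : ℕ} (φ : En n → ℝ) : Prop :=
  ContDiff ℝ (⊤ : ℕ∞) φ ∧ ∀ (k : ℕ) (β : Fin n → ℕ), ∃ C : ℝ,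
    ∀ x, (1 + ‖x‖) ^ k * |pderivM β φ x| ≤ C

/-- The Schwartz seminorm `p_N(φ) = Σ_{|β| ≤ N} sup_x (1+|x|)^N |∂^β φ(x)|`. -/
def pSemi {n : ℕ} (N : ℕ) (φ : En n → ℝ) : ℝ≥0∞ :=
  ∑ β : Fin n → Fin (N + 1),
    if (∑ i, (β i : ℕ)) ≤ N then
      ⨆ x : En n, ENNReal.ofReal ((1 + ‖x‖) ^ N * |pderivM (fun i => (β i : ℕ)) φ x|)
    else 0

/-- The grand maximal function of a distribution given by the pairing `u`. -/
def grandMax {n : ℕ} (N : ℕ) (u : (En n → ℝ) → ℝ) (x : En n) : ℝ≥0∞ :=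
  ⨆ (t : ℝ) (_ : 0 < t) (φ : En n → ℝ) (_ : IsSchwartzFn φ) (_ : pSemi N φ ≤ 1),
    ENNReal.ofReal |u fun y => (t ^ n)⁻¹ * φ (t⁻¹ • (x - y))|

/-- The weighted Hardy space "norm" `‖f‖_{H^p(w)} = ‖M_{F_N} f‖_{L^p(w)}`. -/
def hardyNorm {n : ℕ} (N : ℕ) (p : ℝ) (w : En n → ℝ) (u : (En n → ℝ) → ℝ) : ℝ≥0∞ :=
  (∫⁻ x, grandMax N u x ^ p * ENNReal.ofReal (w x)) ^ (1 / p)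

/-- The uncentered Hardy–Littlewood maximal operator (ℝ≥0∞-valued version). -/
def maxFnE {n : ℕ} (f : En n → ℝ≥0∞) (x : En n) : ℝ≥0∞ :=
  ⨆ (z : En n) (r : ℝ) (_ : 0 < r) (_ : x ∈ cube z r),
    (volume (cube z r))⁻¹ * ∫⁻ y in cube z r, f y

/-- The uncentered Hardy–Littlewood maximal operator over cubes. -/
def maxFn {n : ℕ} (f : En n → ℝ) (x : En n) : ℝ≥0∞ :=
  maxFnE (fun y => ENNReal.ofReal |f y|) x

/-- The fundamental solution `Φ` of `Δ^m`. -/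
def Phi {n : ℕ} (m : ℕ) (C₁ C₂ : ℝ) (x : En n) : ℝ :=
  if Even n ∧ n ≤ 2 * m then C₁ * ‖x‖ ^ ((2 * (m : ℤ) - (n : ℤ))) * Real.log ‖x‖
  else C₂ * ‖x‖ ^ ((2 * (m : ℤ) - (n : ℤ)))

/-- The truncated singular integral maximal operator `T*_α`. -/
def Tstar {n : ℕ} (m : ℕ) (C₁ C₂ : ℝ) (α : Fin n → ℕ) (a : En n → ℝ) (x : En n) : ℝ≥0∞ :=
  ⨆ (ε : ℝ) (_ : 0 < ε),
    ENNReal.ofReal |∫ y in {y : En n | ε < dist x y}, pderivM α (Phi m C₁ C₂) (x - y) * a y|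

/-- The critical index `q_w` of a weight. -/
def qIndex {n : ℕ} (w : En n → ℝ) : ℝ := sInf {s : ℝ | 1 < s ∧ MuckA s w}

/-- The set of reverse Hölder exponents of `w`. -/
def rhSet {n : ℕ} (w : En n → ℝ) : Set ℝ := {s : ℝ | 1 < s ∧ RevHolder s w}

/-- The quantity `r_w/(r_w - 1)`, with the convention that it is `1` when `r_w = ∞`. -/
def rwFactor {n : ℕ} (w : En n → ℝ) : ℝ :=
  haveI := Classical.propDecidable (BddAbove (rhSet w))
  if BddAbove (rhSet w) then sSup (rhSet w) / (sSup (rhSet w) - 1) else 1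

/-- A `w-(p, p₀, d)` atom supported in the cube `Q(x₀, r)`. -/
def IsAtomOn {n : ℕ} (p p₀ : ℝ) (d : ℤ) (w : En n → ℝ) (x₀ : En n) (r : ℝ)
    (a : En n → ℝ) : Prop :=
  Measurable a ∧ Function.support a ⊆ cube x₀ r ∧
    (∫⁻ y, ENNReal.ofReal (|a y| ^ p₀)) ^ (1 / p₀) ≤
      volume (cube x₀ r) ^ (1 / p₀) * (wInt w (cube x₀ r)) ^ (-(1 / p)) ∧
    ∀ β : Fin n → ℕ, ((∑ i, β i : ℤ) ≤ d) →
      ∫ y, (∏ i, y i ^ β i) * a y = 0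



section Helpers
variable {n : ℕ} {q : ℝ}


lemma cube_eq_preimage (x : En n) (r : ℝ) :
    cube x r = (⇑(MeasurableEquiv.toLp 2 (Fin n → ℝ)).symm) ⁻¹'
      (Set.univ.pi fun i => Set.Icc (x i - r/2) (x i + r/2)) := by
  ext y
  simp only [cube, Set.mem_preimage, Set.mem_pi, Set.mem_univ, forall_true_left, Set.mem_Icc,
    Set.mem_setOf_eq, MeasurableEquiv.coe_toLp_symm]
  constructor
  · intro h i; have := abs_le.1 (h i); constructor <;> linarith [this.1, this.2]
  · intro h i; rw [abs_le]; have := h i; constructor <;> linarith [this.1, this.2]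

lemma measurableSet_cube (x : En n) (r : ℝ) : MeasurableSet (cube x r) := by
  rw [cube_eq_preimage]
  exact (MeasurableEquiv.toLp 2 (Fin n → ℝ)).symm.measurable
    (MeasurableSet.univ_pi fun i => measurableSet_Icc)

lemma volume_cube (x : En n) (r : ℝ) :
    volume (cube x r) = ENNReal.ofReal r ^ n := by
  rw [cube_eq_preimage,
    (EuclideanSpace.volume_preserving_symm_measurableEquiv_toLp (Fin n)).measure_preimage
      (MeasurableSet.univ_pi fun i => measurableSet_Icc).nullMeasurableSet]
  rw [volume_pi_pi]
  simp only [Real.volume_Icc]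
  simp only [show ∀ i : Fin n, x i + r/2 - (x i - r/2) = r by intro i; ring]
  rw [Finset.prod_const, Finset.card_univ, Fintype.card_fin]

lemma volume_cube_pos (x : En n) {r : ℝ} (hr : 0 < r) : 0 < volume (cube x r) := by
  rw [volume_cube]
  have : (0:ℝ≥0∞) < ENNReal.ofReal r := by simpa using hr
  positivity

lemma volume_cube_lt_top (x : En n) (r : ℝ) : volume (cube x r) < ⊤ := by
  rw [volume_cube]
  exact pow_lt_top ofReal_lt_top

lemma coord_dist_le (z x₀ : En n) (i : Fin n) : |z i - x₀ i| ≤ dist z x₀ := by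
  rw [EuclideanSpace.dist_eq]
  have h1 : |z i - x₀ i| = Real.sqrt (dist (z i) (x₀ i) ^ 2) := by
    rw [Real.sqrt_sq dist_nonneg, Real.dist_eq]
  rw [h1]
  apply Real.sqrt_le_sqrt
  exact Finset.single_le_sum (f := fun j => dist (z j) (x₀ j) ^ 2)
    (fun j _ => sq_nonneg _) (Finset.mem_univ i)

lemma cube_subset_cube {z x₀ : En n} {s r : ℝ} (h : s + 2 * dist z x₀ ≤ r) :
    cube z s ⊆ cube x₀ r := by
  intro y hy i
  have h1 := hy i
  have h2 := coord_dist_le z x₀ i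
  have := abs_sub_abs_le_abs_sub (y i - x₀ i) (y i - z i)
  have h3 : |y i - x₀ i| ≤ |y i - z i| + |z i - x₀ i| := by
    calc |y i - x₀ i| = |(y i - z i) + (z i - x₀ i)| := by ring_nf
      _ ≤ _ := abs_add_le _ _
  linarith

lemma isClosed_cube (x : En n) (r : ℝ) : IsClosed (cube x r) := by
  have : cube x r = ⋂ i, {y : En n | |y i - x i| ≤ r / 2} := by
    ext y; simp [cube]
  rw [this]
  refine isClosed_iInter fun i => ?_
  have hc : Continuous fun y : En n => |y i - x i| :=
    (((EuclideanSpace.proj (𝕜 := ℝ) i).continuous).sub continuous_const).abs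
  exact isClosed_le hc continuous_const

lemma isCompact_cube (x : En n) (r : ℝ) : IsCompact (cube x r) := by
  refine Metric.isCompact_of_isClosed_isBounded (isClosed_cube x r) ?_
  have : cube x r ⊆ Metric.closedBall x ((n + 1) * (|r| + 1)) := by
    intro y hy
    rw [Metric.mem_closedBall, EuclideanSpace.dist_eq]
    have hb : ∀ i, dist (y i) (x i) ^ 2 ≤ (|r|/2 + 1) ^ 2 := by
      intro i
      have := hy i
      have h1 : |y i - x i| ≤ |r| / 2 + 1 := by
        have := le_abs_self r; have := abs_nonneg r; linarith
      rw [Real.dist_eq]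
      have h0 : (0:ℝ) ≤ |y i - x i| := abs_nonneg _
      nlinarith
    have hsum : ∑ i : Fin n, dist (y i) (x i) ^ 2 ≤ n * (|r|/2 + 1)^2 := by
      calc ∑ i : Fin n, dist (y i) (x i) ^ 2 ≤ ∑ _i : Fin n, (|r|/2 + 1)^2 :=
            Finset.sum_le_sum fun i _ => hb i
        _ = n * (|r|/2+1)^2 := by rw [Finset.sum_const, Finset.card_univ, Fintype.card_fin,
            nsmul_eq_mul]
    calc Real.sqrt (∑ i : Fin n, dist (y i) (x i) ^ 2)
        ≤ Real.sqrt ((n : ℝ) * (|r|/2+1)^2) := Real.sqrt_le_sqrt hsum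
      _ ≤ (n + 1) * (|r| + 1) := by
          rw [show ((n:ℝ)+1)*(|r|+1) = Real.sqrt ((((n:ℝ)+1)*(|r|+1))^2) by
            rw [Real.sqrt_sq (by positivity)]]
          apply Real.sqrt_le_sqrt
          have h0 : (0:ℝ) ≤ |r| := abs_nonneg r
          have h1 : (0:ℝ) ≤ n := Nat.cast_nonneg n
          have key : (|r|/2+1)^2 ≤ (|r|+1)^2 := by nlinarith
          have key2 : (n:ℝ) * (|r|/2+1)^2 ≤ ((n:ℝ)+1) * (|r|+1)^2 := by nlinarith
          calc (n:ℝ) * (|r|/2+1)^2 ≤ ((n:ℝ)+1) * (|r|+1)^2 := key2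
            _ ≤ ((n:ℝ)+1)^2 * (|r|+1)^2 := by
                have h2 : (n:ℝ)+1 ≤ ((n:ℝ)+1)^2 := by nlinarith
                exact mul_le_mul_of_nonneg_right h2 (sq_nonneg _)
            _ = (((n:ℝ)+1)*(|r|+1))^2 := by ring
  exact (Bornology.IsBounded.subset (Metric.isBounded_closedBall) this)


lemma ofReal_abs_rpow (hq : 0 < q) (a : ℝ) :
    ENNReal.ofReal (|a| ^ q) = ENNReal.ofReal |a| ^ q :=
  (ENNReal.ofReal_rpow_of_nonneg (abs_nonneg a) hq.le).symm

lemma lqQ_eq (hq : 0 < q) (g : En n → ℝ) (Q : Set (En n)) :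
    lqQ q g Q = ((volume Q)⁻¹) ^ (1/q) * (∫⁻ y in Q, ENNReal.ofReal |g y| ^ q) ^ (1/q) := by
  unfold lqQ
  rw [← ENNReal.mul_rpow_of_nonneg _ _ (one_div_nonneg.mpr hq.le)]
  congr 2
  exact lintegral_congr fun y => by rw [ofReal_abs_rpow hq]

lemma iSup_rpow_mono {u : ℕ → ℝ≥0∞} (hu : Monotone u) {c : ℝ} (hc : 0 ≤ c) :
    (⨆ M, u M) ^ c = ⨆ M, u M ^ c := by
  have h1 : Tendsto (fun M => u M ^ c) atTop (𝓝 ((⨆ M, u M) ^ c)) :=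
    (ENNReal.continuous_rpow_const.tendsto _).comp (tendsto_atTop_iSup hu)
  have h2 : Tendsto (fun M => u M ^ c) atTop (𝓝 (⨆ M, u M ^ c)) :=
    tendsto_atTop_iSup (fun a b hab => ENNReal.rpow_le_rpow (hu hab) hc)
  exact tendsto_nhds_unique h1 h2

lemma J_sum_le (hq1 : 1 ≤ q) {μ : Measure (En n)} (f : ℕ → En n → ℝ≥0∞)
    (hf : ∀ j, Measurable (f j)) (M : ℕ) :
    (∫⁻ y, (∑ j ∈ Finset.range M, f j y) ^ q ∂μ) ^ (1/q) ≤
      ∑ j ∈ Finset.range M, (∫⁻ y, f j y ^ q ∂μ) ^ (1/q) := by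
  have hq0 : 0 < q := lt_of_lt_of_le one_pos hq1
  induction M with
  | zero =>
    simp only [Finset.range_zero, Finset.sum_empty, ENNReal.zero_rpow_of_pos hq0,
      lintegral_zero, ENNReal.zero_rpow_of_pos (one_div_pos.mpr hq0), le_refl]
  | succ M ih =>
    simp only [Finset.sum_range_succ]
    calc (∫⁻ y, (∑ j ∈ Finset.range M, f j y + f M y) ^ q ∂μ) ^ (1/q)
        ≤ (∫⁻ y, ((fun z => ∑ j ∈ Finset.range M, f j z) + f M) y ^ q ∂μ) ^ (1/q) := le_refl _
      _ ≤ (∫⁻ y, (∑ j ∈ Finset.range M, f j y) ^ q ∂μ) ^ (1/q) + (∫⁻ y, f M y ^ q ∂μ) ^ (1/q) :=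
          ENNReal.lintegral_Lp_add_le
            (Finset.measurable_sum _ fun j _ => hf j).aemeasurable (hf M).aemeasurable hq1
      _ ≤ _ := add_le_add_left ih _

lemma J_tsum_le (hq1 : 1 ≤ q) {μ : Measure (En n)} (f : ℕ → En n → ℝ≥0∞)
    (hf : ∀ j, Measurable (f j)) :
    (∫⁻ y, (∑' j, f j y) ^ q ∂μ) ^ (1/q) ≤ ∑' j, (∫⁻ y, f j y ^ q ∂μ) ^ (1/q) := by
  have hq0 : 0 < q := lt_of_lt_of_le one_pos hq1
  have hmono : ∀ y : En n, Monotone fun M => ∑ j ∈ Finset.range M, f j y := fun y =>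
    fun a b hab => Finset.sum_le_sum_of_subset (Finset.range_subset_range.2 hab)
  have h1 : ∀ y : En n, (∑' j, f j y) ^ q = ⨆ M, (∑ j ∈ Finset.range M, f j y) ^ q := by
    intro y
    rw [ENNReal.tsum_eq_iSup_nat, iSup_rpow_mono (hmono y) hq0.le]
  calc (∫⁻ y, (∑' j, f j y) ^ q ∂μ) ^ (1/q)
      = (∫⁻ y, ⨆ M, (∑ j ∈ Finset.range M, f j y) ^ q ∂μ) ^ (1/q) := by
        congr 1; exact lintegral_congr h1
    _ = (⨆ M, ∫⁻ y, (∑ j ∈ Finset.range M, f j y) ^ q ∂μ) ^ (1/q) := by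
        congr 1
        refine lintegral_iSup' (fun M => ((Finset.measurable_sum _ fun j _ => hf j).pow_const
          _).aemeasurable) (ae_of_all _ fun y a b hab => ENNReal.rpow_le_rpow (hmono y hab) hq0.le)
    _ = ⨆ M, (∫⁻ y, (∑ j ∈ Finset.range M, f j y) ^ q ∂μ) ^ (1/q) := by
        refine iSup_rpow_mono (fun a b hab => lintegral_mono fun y =>
          ENNReal.rpow_le_rpow (hmono y hab) hq0.le) (one_div_nonneg.mpr hq0.le)
    _ ≤ ⨆ M, ∑ j ∈ Finset.range M, (∫⁻ y, f j y ^ q ∂μ) ^ (1/q) :=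
        iSup_mono fun M => J_sum_le hq1 f hf M
    _ ≤ ∑' j, (∫⁻ y, f j y ^ q ∂μ) ^ (1/q) :=
        iSup_le fun M => ENNReal.sum_le_tsum _

lemma vol_rpow_cancel {x : En n} {r : ℝ} (hr : 0 < r) {c : ℝ} (hc : 0 ≤ c) :
    ((volume (cube x r))⁻¹) ^ c * (volume (cube x r)) ^ c = 1 := by
  rw [← ENNReal.mul_rpow_of_nonneg _ _ hc,
    ENNReal.inv_mul_cancel (volume_cube_pos x hr).ne' (volume_cube_lt_top x r).ne,
    ENNReal.one_rpow]

lemma J_eq_vol_mul_lqQ (hq0 : 0 < q) (g : En n → ℝ) {x : En n} {r : ℝ} (hr : 0 < r) :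
    (∫⁻ y in cube x r, ENNReal.ofReal |g y| ^ q) ^ (1/q)
      = (volume (cube x r)) ^ (1/q) * lqQ q g (cube x r) := by
  rw [lqQ_eq hq0, ← mul_assoc, ← ENNReal.mul_rpow_of_nonneg _ _ (one_div_nonneg.mpr hq0.le),
    ENNReal.mul_inv_cancel (volume_cube_pos x hr).ne' (volume_cube_lt_top x r).ne,
    ENNReal.one_rpow, one_mul]

lemma ofReal_rpow_neg_mul (hγ : True) {r γ : ℝ} (hr : 0 < r) :
    ENNReal.ofReal (r ^ (-γ)) * ENNReal.ofReal (r ^ γ) = 1 := by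
  rw [← ENNReal.ofReal_mul (Real.rpow_nonneg hr.le _), ← Real.rpow_add hr]
  simp

lemma le_eta {γ : ℝ} {g : En n → ℝ} {x : En n} {r : ℝ} (hr : 0 < r) :
    ENNReal.ofReal (r ^ (-γ)) * lqQ q g (cube x r) ≤ eta q γ g x := by
  unfold eta
  exact le_iSup₂ (f := fun (r : ℝ) (_ : 0 < r) => ENNReal.ofReal (r ^ (-γ)) * lqQ q g (cube x r))
    r hr

lemma lqQ_le_eta {γ : ℝ} {g : En n → ℝ} {x : En n} {r : ℝ} (hr : 0 < r) :
    lqQ q g (cube x r) ≤ ENNReal.ofReal (r ^ γ) * eta q γ g x := by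
  calc lqQ q g (cube x r)
      = ENNReal.ofReal (r ^ γ) * (ENNReal.ofReal (r ^ (-γ)) * lqQ q g (cube x r)) := by
        rw [← mul_assoc, mul_comm (ENNReal.ofReal (r ^ γ)), ofReal_rpow_neg_mul trivial hr,
          one_mul]
    _ ≤ _ := mul_le_mul_right (le_eta hr) _

lemma eta_le {γ : ℝ} {g : En n → ℝ} {x : En n} {C : ℝ≥0∞}
    (h : ∀ r : ℝ, 0 < r → lqQ q g (cube x r) ≤ ENNReal.ofReal (r ^ γ) * C) :
    eta q γ g x ≤ C := by
  refine iSup₂_le fun r hr => ?_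
  calc ENNReal.ofReal (r ^ (-γ)) * lqQ q g (cube x r)
      ≤ ENNReal.ofReal (r ^ (-γ)) * (ENNReal.ofReal (r ^ γ) * C) :=
        mul_le_mul_right (h r hr) _
    _ = C := by rw [← mul_assoc, ofReal_rpow_neg_mul trivial hr, one_mul]

lemma isPolyDegLe_zero {k : ℕ} : IsPolyDegLe (n := n) k (fun _ => 0) :=
  ⟨0, by simp, by simp⟩

lemma IsPolyDegLe.continuous {k : ℕ} {P : En n → ℝ} (h : IsPolyDegLe k P) : Continuous P := by
  obtain ⟨p, -, hp⟩ := h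
  have hP : P = fun x => MvPolynomial.eval (fun i => x i) p := funext hp
  rw [hP]
  have : ∀ x : En n, MvPolynomial.eval (fun i => x i) p =
      ∑ d ∈ p.support, MvPolynomial.coeff d p * ∏ i ∈ d.support, (x i) ^ d i := fun x =>
    MvPolynomial.eval_eq _ p
  rw [funext this]
  refine continuous_finset_sum _ fun d _ => Continuous.mul continuous_const ?_
  refine continuous_finset_prod _ fun i _ => ?_
  exact ((EuclideanSpace.proj (𝕜 := ℝ) i).continuous).pow _

lemma IsPolyDegLe.measurable {k : ℕ} {P : En n → ℝ} (h : IsPolyDegLe k P) : Measurable P :=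
  h.continuous.measurable

lemma IsPolyDegLe.add {k : ℕ} {P R : En n → ℝ} (hP : IsPolyDegLe k P) (hR : IsPolyDegLe k R) :
    IsPolyDegLe k (fun y => P y + R y) := by
  obtain ⟨p, hpd, hp⟩ := hP; obtain ⟨r, hrd, hr⟩ := hR
  refine ⟨p + r, le_trans (MvPolynomial.totalDegree_add p r) (max_le hpd hrd), fun x => by
    simp [hp x, hr x]⟩

lemma IsPolyDegLe.neg {k : ℕ} {P : En n → ℝ} (hP : IsPolyDegLe k P) :
    IsPolyDegLe k (fun y => -(P y)) := by
  obtain ⟨p, hpd, hp⟩ := hP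
  exact ⟨-p, by simpa using hpd, fun x => by simp [hp x]⟩

lemma IsPolyDegLe.sum {k : ℕ} {P : ℕ → En n → ℝ} (hP : ∀ j, IsPolyDegLe k (P j)) (M : ℕ) :
    IsPolyDegLe k (fun y => ∑ j ∈ Finset.range M, P j y) := by
  induction M with
  | zero => simpa using isPolyDegLe_zero
  | succ M ih =>
    have := ih.add (hP M)
    simpa [Finset.sum_range_succ] using this

lemma lqQ_add_le (hq1 : 1 ≤ q) {f g : En n → ℝ} (hf : Measurable f) (hg : Measurable g)
    (Q : Set (En n)) :
    lqQ q (fun y => f y + g y) Q ≤ lqQ q f Q + lqQ q g Q := by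
  have hq0 : 0 < q := lt_of_lt_of_le one_pos hq1
  rw [lqQ_eq hq0, lqQ_eq hq0, lqQ_eq hq0, ← mul_add]
  refine mul_le_mul_right ?_ _
  calc (∫⁻ y in Q, ENNReal.ofReal |f y + g y| ^ q) ^ (1/q)
      ≤ (∫⁻ y in Q, ((fun z => ENNReal.ofReal |f z|) + fun z => ENNReal.ofReal |g z|) y ^ q) ^ (1/q) := by
        refine ENNReal.rpow_le_rpow (lintegral_mono fun y => ?_) (one_div_nonneg.mpr hq0.le)
        refine ENNReal.rpow_le_rpow ?_ hq0.le
        simp only [Pi.add_apply]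
        exact le_trans (ENNReal.ofReal_le_ofReal (abs_add_le _ _)) (ENNReal.ofReal_add_le)
    _ ≤ _ := ENNReal.lintegral_Lp_add_le (hf.norm.ennreal_ofReal.aemeasurable.congr
          (ae_of_all _ fun y => by simp [Real.norm_eq_abs]))
          (hg.norm.ennreal_ofReal.aemeasurable.congr (ae_of_all _ fun y => by
            simp [Real.norm_eq_abs])) hq1

lemma eta_add_le (hq1 : 1 ≤ q) {γ : ℝ} {f g : En n → ℝ} (hf : Measurable f) (hg : Measurable g)
    (x : En n) : eta q γ (fun y => f y + g y) x ≤ eta q γ f x + eta q γ g x := by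
  refine iSup₂_le fun r hr => ?_
  calc ENNReal.ofReal (r ^ (-γ)) * lqQ q (fun y => f y + g y) (cube x r)
      ≤ ENNReal.ofReal (r ^ (-γ)) * (lqQ q f (cube x r) + lqQ q g (cube x r)) :=
        mul_le_mul_right (lqQ_add_le hq1 hf hg _) _
    _ = ENNReal.ofReal (r ^ (-γ)) * lqQ q f (cube x r)
        + ENNReal.ofReal (r ^ (-γ)) * lqQ q g (cube x r) := mul_add _ _ _
    _ ≤ _ := add_le_add (le_eta hr) (le_eta hr)

lemma Nmax_le_eta_sub {γ : ℝ} {k : ℕ} {g P : En n → ℝ} (hP : IsPolyDegLe k P) (x : En n) :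
    Nmax q γ k g x ≤ eta q γ (fun y => g y - P y) x :=
  iInf_le (fun (P : {P : En n → ℝ // IsPolyDegLe k P}) => eta q γ (fun y => g y - P.1 y) x)
    ⟨P, hP⟩

lemma Nmax_le_eta {γ : ℝ} {k : ℕ} {g : En n → ℝ} (x : En n) :
    Nmax q γ k g x ≤ eta q γ g x := by
  have := Nmax_le_eta_sub (q := q) (γ := γ) (g := g) (isPolyDegLe_zero (k := k)) x
  simpa using this

lemma Nmax_add_le (hq1 : 1 ≤ q) {γ : ℝ} {k : ℕ} {f g : En n → ℝ}
    (hf : Measurable f) (hg : Measurable g) (x : En n) :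
    Nmax q γ k (fun y => f y + g y) x ≤ Nmax q γ k f x + Nmax q γ k g x := by
  refine ENNReal.le_of_forall_pos_le_add fun ε hε hlt => ?_
  have hhalf : ((ε/2 : NNReal) : ℝ≥0∞) ≠ 0 := by
    simp only [ne_eq, ENNReal.coe_eq_zero]
    exact (half_pos hε).ne'
  have hf' : Nmax q γ k f x < Nmax q γ k f x + ((ε/2 : NNReal) : ℝ≥0∞) :=
    ENNReal.lt_add_right (ne_top_of_le_ne_top hlt.ne le_self_add) hhalf
  have hg' : Nmax q γ k g x < Nmax q γ k g x + ((ε/2 : NNReal) : ℝ≥0∞) :=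
    ENNReal.lt_add_right (ne_top_of_le_ne_top hlt.ne le_add_self) hhalf
  obtain ⟨⟨P, hPp⟩, hP⟩ := iInf_lt_iff.1 (lt_of_le_of_lt (le_refl (Nmax q γ k f x)) hf')
  obtain ⟨⟨R, hRp⟩, hR⟩ := iInf_lt_iff.1 (lt_of_le_of_lt (le_refl (Nmax q γ k g x)) hg')
  have key : Nmax q γ k (fun y => f y + g y) x
      ≤ eta q γ (fun y => f y - P y) x + eta q γ (fun y => g y - R y) x := by
    refine le_trans (Nmax_le_eta_sub (hPp.add hRp) x) ?_
    have hfe : (fun y => (f y + g y) - (P y + R y)) = fun y => (f y - P y) + (g y - R y) :=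
      funext fun y => by ring
    rw [hfe]
    exact eta_add_le hq1 (hf.sub hPp.measurable) (hg.sub hRp.measurable) x
  calc Nmax q γ k (fun y => f y + g y) x
      ≤ eta q γ (fun y => f y - P y) x + eta q γ (fun y => g y - R y) x := key
    _ ≤ (Nmax q γ k f x + ((ε/2 : NNReal) : ℝ≥0∞)) + (Nmax q γ k g x + ((ε/2 : NNReal) : ℝ≥0∞)) :=
        add_le_add hP.le hR.le
    _ = Nmax q γ k f x + Nmax q γ k g x + (((ε/2 : NNReal) : ℝ≥0∞) + ((ε/2 : NNReal) : ℝ≥0∞)) := by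
        ring
    _ = Nmax q γ k f x + Nmax q γ k g x + ((ε : NNReal) : ℝ≥0∞) := by
        rw [← ENNReal.coe_add, add_halves]

lemma toReal_ofReal_max (x : ℝ) : (ENNReal.ofReal x).toReal = max x 0 := rfl

lemma exists_cube_mem (x₀ y : En n) : ∃ N : ℕ, y ∈ cube x₀ (N + 1) := by
  obtain ⟨N, hN⟩ := exists_nat_ge (2 * dist y x₀)
  refine ⟨N, fun i => ?_⟩
  have h1 := coord_dist_le y x₀ i
  have : dist y x₀ ≤ (N : ℝ) / 2 := by linarith
  have hN1 : ((N : ℝ)) ≤ (N : ℝ) + 1 := by linarith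
  calc |y i - x₀ i| ≤ dist y x₀ := h1
    _ ≤ (N : ℝ) / 2 := this
    _ ≤ ((N : ℝ) + 1) / 2 := by linarith

lemma F_int (hq : 1 < q) {γ : ℝ} {h : ℕ → En n → ℝ} (hmeas : ∀ j, Measurable (h j))
    {x₀ : En n} (hE : ∑' j, eta q γ (h j) x₀ ≠ ⊤) {r : ℝ} (hr : 0 < r) :
    ∫⁻ y in cube x₀ r, (∑' j, ENNReal.ofReal |h j y|) ^ q < ⊤ := by
  have hq0 : 0 < q := lt_trans one_pos hq
  have key : (∫⁻ y in cube x₀ r, (∑' j, ENNReal.ofReal |h j y|) ^ q) ^ (1/q)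
      ≤ (volume (cube x₀ r)) ^ (1/q) * ENNReal.ofReal (r ^ γ)
        * ∑' j, eta q γ (h j) x₀ := by
    calc (∫⁻ y in cube x₀ r, (∑' j, ENNReal.ofReal |h j y|) ^ q) ^ (1/q)
        ≤ ∑' j, (∫⁻ y in cube x₀ r, ENNReal.ofReal |h j y| ^ q) ^ (1/q) :=
          J_tsum_le hq.le _ (fun j => (hmeas j).abs.ennreal_ofReal)
      _ ≤ ∑' j, (volume (cube x₀ r)) ^ (1/q) * (ENNReal.ofReal (r ^ γ) * eta q γ (h j) x₀) := by
          refine ENNReal.tsum_le_tsum fun j => ?_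
          rw [J_eq_vol_mul_lqQ hq0 _ hr]
          exact mul_le_mul_right (lqQ_le_eta hr) _
      _ = (volume (cube x₀ r)) ^ (1/q) * ENNReal.ofReal (r ^ γ) * ∑' j, eta q γ (h j) x₀ := by
          rw [ENNReal.tsum_mul_left, ENNReal.tsum_mul_left, ← mul_assoc]
  have hfin : (volume (cube x₀ r)) ^ (1/q) * ENNReal.ofReal (r ^ γ)
      * ∑' j, eta q γ (h j) x₀ < ⊤ := by
    refine ENNReal.mul_lt_top (ENNReal.mul_lt_top ?_ ENNReal.ofReal_lt_top) ?_
    · exact ENNReal.rpow_lt_top_of_nonneg (one_div_nonneg.mpr hq0.le)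
        (volume_cube_lt_top x₀ r).ne
    · exact lt_top_iff_ne_top.2 hE
  by_contra hcon
  rw [not_lt, top_le_iff] at hcon
  rw [hcon, ENNReal.top_rpow_of_pos (one_div_pos.mpr hq0)] at key
  exact absurd (lt_of_le_of_lt key hfin) (lt_irrefl ⊤)

lemma F_ae_lt_top (hq : 1 < q) {γ : ℝ} {h : ℕ → En n → ℝ} (hmeas : ∀ j, Measurable (h j))
    {x₀ : En n} (hE : ∑' j, eta q γ (h j) x₀ ≠ ⊤) :
    ∀ᵐ y ∂(volume : Measure (En n)), (∑' j, ENNReal.ofReal |h j y|) < ⊤ := by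
  have hq0 : 0 < q := lt_trans one_pos hq
  set F : En n → ℝ≥0∞ := fun y => ∑' j, ENNReal.ofReal |h j y| with hF
  have hFmeas : Measurable F := Measurable.ennreal_tsum fun j => (hmeas j).abs.ennreal_ofReal
  have hSmeas : MeasurableSet {y : En n | F y = ⊤} := hFmeas (measurableSet_singleton ⊤)
  have hcube : ∀ N : ℕ, volume ({y : En n | F y = ⊤} ∩ cube x₀ (N + 1)) = 0 := by
    intro N
    have hN : (0:ℝ) < (N : ℝ) + 1 := by positivity
    have hint := F_int hq hmeas hE (x₀ := x₀) hN
    have hae : ∀ᵐ y ∂(volume.restrict (cube x₀ ((N:ℝ) + 1))), F y ^ q < ⊤ :=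
      ae_lt_top (hFmeas.pow_const q) hint.ne
    have hae2 : ∀ᵐ y ∂(volume.restrict (cube x₀ ((N:ℝ) + 1))), ¬ (F y = ⊤) := by
      filter_upwards [hae] with y hy
      intro hcon
      rw [hcon, ENNReal.top_rpow_of_pos hq0] at hy
      exact absurd hy (lt_irrefl ⊤)
    have := ae_iff.1 hae2
    simp only [not_not] at this
    rw [← Measure.restrict_apply hSmeas]
    exact this
  have hcover : {y : En n | F y = ⊤} ⊆ ⋃ N : ℕ, ({y : En n | F y = ⊤} ∩ cube x₀ (N + 1)) := by
    intro y hy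
    obtain ⟨N, hN⟩ := exists_cube_mem x₀ y
    exact Set.mem_iUnion.2 ⟨N, hy, hN⟩
  have hnull : volume {y : En n | F y = ⊤} = 0 :=
    measure_mono_null hcover (measure_iUnion_null hcube)
  rw [ae_iff]
  convert hnull using 2
  ext y
  simp [lt_top_iff_ne_top, hF]

lemma construct (hq : 1 < q) {γ : ℝ} {h : ℕ → En n → ℝ} (hmeas : ∀ j, Measurable (h j))
    {x₀ : En n} (hE : ∑' j, eta q γ (h j) x₀ ≠ ⊤) :
    ∃ g : En n → ℝ, Measurable g ∧
      (∀ᵐ y ∂(volume : Measure (En n)),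
        ∀ M : ℕ, ENNReal.ofReal |g y - ∑ j ∈ Finset.range M, h j y|
          ≤ ∑' j, ENNReal.ofReal |h (j + M) y|) := by
  classical
  refine ⟨fun y => (∑' j, ENNReal.ofReal (h j y)).toReal
    - (∑' j, ENNReal.ofReal (-h j y)).toReal,
    ((Measurable.ennreal_tsum fun j => (hmeas j).ennreal_ofReal).ennreal_toReal).sub
      ((Measurable.ennreal_tsum fun j => (hmeas j).neg.ennreal_ofReal).ennreal_toReal), ?_⟩
  filter_upwards [F_ae_lt_top hq hmeas hE] with y hy M
  -- summability
  have hcoe : ∀ j, ENNReal.ofReal |h j y| = ((‖h j y‖₊ : ℝ≥0∞)) := fun j => by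
    rw [← Real.norm_eq_abs]; exact ENNReal.ofReal_eq_coe_nnreal _
  have hne : ∑' j, ((‖h j y‖₊ : ℝ≥0∞)) ≠ ⊤ := by
    rw [← tsum_congr hcoe]
    exact hy.ne
  have hsnn : Summable fun j => ‖h j y‖₊ := ENNReal.tsum_coe_ne_top_iff_summable.1 hne
  have habs : Summable fun j => |h j y| := by
    refine (NNReal.summable_coe.2 hsnn).congr fun j => ?_
    rw [coe_nnnorm, Real.norm_eq_abs]
  have hsum : Summable fun j => h j y := habs.of_abs
  -- identify the value
  have hpos : Summable fun j => max (h j y) 0 :=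
    habs.of_nonneg_of_le (fun j => le_max_right _ _)
      (fun j => max_le (le_abs_self _) (abs_nonneg _))
  have hneg : Summable fun j => max (-h j y) 0 :=
    habs.of_nonneg_of_le (fun j => le_max_right _ _)
      (fun j => max_le (by rw [abs_eq_max_neg]; exact le_max_right _ _) (abs_nonneg _))
  have gval : (∑' j, ENNReal.ofReal (h j y)).toReal
      - (∑' j, ENNReal.ofReal (-h j y)).toReal = ∑' j, h j y := by
    rw [ENNReal.tsum_toReal_eq (fun j => ENNReal.ofReal_ne_top),
      ENNReal.tsum_toReal_eq (fun j => ENNReal.ofReal_ne_top)]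
    simp only [toReal_ofReal_max]
    rw [← Summable.tsum_sub hpos hneg]
    refine tsum_congr fun j => ?_
    rcases le_total (h j y) 0 with hle | hle
    · rw [max_eq_right hle, max_eq_left (by linarith)]; linarith
    · rw [max_eq_left hle, max_eq_right (by linarith)]; linarith
  rw [gval]
  have htail : (∑' j, h j y) - ∑ j ∈ Finset.range M, h j y = ∑' j, h (j + M) y := by
    have := Summable.sum_add_tsum_nat_add (f := fun j => h j y) M hsum
    linarith
  rw [htail]
  have habs' : Summable fun j => |h (j + M) y| := by
    exact (summable_nat_add_iff M).2 habs
  calc ENNReal.ofReal |∑' j, h (j + M) y|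
      ≤ ENNReal.ofReal (∑' j, |h (j + M) y|) := by
        refine ENNReal.ofReal_le_ofReal ?_
        have := norm_tsum_le_tsum_norm (f := fun j => h (j + M) y) (by
          simpa [Real.norm_eq_abs] using habs')
        simpa [Real.norm_eq_abs] using this
    _ = ∑' j, ENNReal.ofReal |h (j + M) y| :=
        ENNReal.ofReal_tsum_of_nonneg (fun j => abs_nonneg _) habs'

lemma tail_bound (hq : 1 < q) {γ : ℝ} {h : ℕ → En n → ℝ} (hmeas : ∀ j, Measurable (h j))
    {x₀ : En n} {g : En n → ℝ} (M : ℕ)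
    (hdom : ∀ᵐ y ∂(volume : Measure (En n)),
        ENNReal.ofReal |g y - ∑ j ∈ Finset.range M, h j y|
          ≤ ∑' j, ENNReal.ofReal |h (j + M) y|)
    {z : En n} {s r : ℝ} (hs : 0 < s) (hr : 0 < r) (hsub : cube z s ⊆ cube x₀ r) :
    lqQ q (fun y => g y - ∑ j ∈ Finset.range M, h j y) (cube z s)
      ≤ ((volume (cube z s))⁻¹) ^ (1/q) * ((volume (cube x₀ r)) ^ (1/q)
        * (ENNReal.ofReal (r ^ γ) * ∑' j, eta q γ (h (j + M)) x₀)) := by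
  have hq0 : 0 < q := lt_trans one_pos hq
  rw [lqQ_eq hq0]
  refine mul_le_mul_right ?_ _
  calc (∫⁻ y in cube z s, ENNReal.ofReal |g y - ∑ j ∈ Finset.range M, h j y| ^ q) ^ (1/q)
      ≤ (∫⁻ y in cube z s, (∑' j, ENNReal.ofReal |h (j + M) y|) ^ q) ^ (1/q) := by
        refine ENNReal.rpow_le_rpow ?_ (one_div_nonneg.mpr hq0.le)
        refine lintegral_mono_ae ?_
        filter_upwards [ae_restrict_of_ae hdom] with y hy
        exact ENNReal.rpow_le_rpow hy hq0.le
    _ ≤ ∑' j, (∫⁻ y in cube z s, ENNReal.ofReal |h (j + M) y| ^ q) ^ (1/q) :=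
        J_tsum_le hq.le _ (fun j => (hmeas (j + M)).abs.ennreal_ofReal)
    _ ≤ ∑' j, (∫⁻ y in cube x₀ r, ENNReal.ofReal |h (j + M) y| ^ q) ^ (1/q) :=
        ENNReal.tsum_le_tsum fun j => ENNReal.rpow_le_rpow
          (lintegral_mono_set hsub) (one_div_nonneg.mpr hq0.le)
    _ ≤ ∑' j, (volume (cube x₀ r)) ^ (1/q) * (ENNReal.ofReal (r ^ γ)
        * eta q γ (h (j + M)) x₀) := by
        refine ENNReal.tsum_le_tsum fun j => ?_
        rw [J_eq_vol_mul_lqQ hq0 _ hr]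
        exact mul_le_mul_right (lqQ_le_eta hr) _
    _ = (volume (cube x₀ r)) ^ (1/q) * (ENNReal.ofReal (r ^ γ)
        * ∑' j, eta q γ (h (j + M)) x₀) := by
        rw [ENNReal.tsum_mul_left, ENNReal.tsum_mul_left]

lemma lintegral_lt_top_of_lqQ (hq0 : 0 < q) {g : En n → ℝ} {z : En n} {s : ℝ} (hs : 0 < s)
    (hlq : lqQ q g (cube z s) < ⊤) :
    ∫⁻ y in cube z s, ENNReal.ofReal (|g y| ^ q) < ⊤ := by
  by_contra hcon
  rw [not_lt, top_le_iff] at hcon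
  have : lqQ q g (cube z s) = ⊤ := by
    unfold lqQ
    rw [hcon, ENNReal.mul_top (by
      simp only [ne_eq, ENNReal.inv_eq_zero]
      exact (volume_cube_lt_top z s).ne), ENNReal.top_rpow_of_pos (one_div_pos.mpr hq0)]
  rw [this] at hlq
  exact absurd hlq (lt_irrefl ⊤)

open scoped Pointwise


lemma eval_aeval' (u : Fin n → ℝ) (f : Fin n → MvPolynomial (Fin n) ℝ)
    (p : MvPolynomial (Fin n) ℝ) :
    MvPolynomial.eval u (MvPolynomial.aeval f p)
      = MvPolynomial.eval (fun i => MvPolynomial.eval u (f i)) p := by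
  induction p using MvPolynomial.induction_on with
  | C a => simp
  | add p r hp hr => simp only [map_add, hp, hr]
  | mul_X p i hp => simp only [map_mul, MvPolynomial.aeval_X, MvPolynomial.eval_X, hp]

lemma totalDegree_aeval_le (f : Fin n → MvPolynomial (Fin n) ℝ)
    (hf : ∀ i, (f i).totalDegree ≤ 1) (p : MvPolynomial (Fin n) ℝ) :
    (MvPolynomial.aeval f p).totalDegree ≤ p.totalDegree := by
  rw [MvPolynomial.aeval_def, MvPolynomial.eval₂_eq]
  refine le_trans (MvPolynomial.totalDegree_finset_sum _ _) ?_
  refine Finset.sup_le fun β hβ => ?_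
  refine le_trans (MvPolynomial.totalDegree_mul _ _) ?_
  have h1 : (algebraMap ℝ (MvPolynomial (Fin n) ℝ) (MvPolynomial.coeff β p)).totalDegree = 0 :=
    MvPolynomial.totalDegree_C _
  rw [h1, zero_add]
  refine le_trans (MvPolynomial.totalDegree_finset_prod _ _) ?_
  calc ∑ i ∈ β.support, (f i ^ β i).totalDegree
      ≤ ∑ i ∈ β.support, β i * (f i).totalDegree :=
        Finset.sum_le_sum fun i _ => MvPolynomial.totalDegree_pow _ _
    _ ≤ ∑ i ∈ β.support, β i := Finset.sum_le_sum fun i _ => by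
        calc β i * (f i).totalDegree ≤ β i * 1 := Nat.mul_le_mul_left _ (hf i)
          _ = β i := Nat.mul_one _
    _ ≤ p.totalDegree := MvPolynomial.le_totalDegree hβ

lemma translate_preimage (x₀ : En n) (r : ℝ) :
    (fun u : En n => x₀ + u) ⁻¹' cube x₀ r = cube 0 r := by
  ext u
  simp only [Set.mem_preimage, cube, Set.mem_setOf_eq, PiLp.add_apply, PiLp.zero_apply]
  refine forall_congr' fun i => ?_
  rw [show x₀ i + u i - x₀ i = u i - 0 by ring]

lemma setLIntegral_translate (x₀ : En n) (r : ℝ) (f : En n → ℝ≥0∞) :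
    ∫⁻ u in cube 0 r, f (x₀ + u) = ∫⁻ y in cube x₀ r, f y := by
  have h := (measurePreserving_add_left (volume : Measure (En n)) x₀)
  have := h.setLIntegral_comp_preimage_emb (MeasurableEquiv.addLeft x₀).measurableEmbedding
    f (cube x₀ r)
  rw [translate_preimage] at this
  exact this

lemma setIntegral_translate (x₀ : En n) (r : ℝ) (f : En n → ℝ) :
    ∫ u in cube 0 r, f (x₀ + u) = ∫ y in cube x₀ r, f y := by
  have h := (measurePreserving_add_left (volume : Measure (En n)) x₀)
  have := h.setIntegral_preimage_emb (MeasurableEquiv.addLeft x₀).measurableEmbedding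
    f (cube x₀ r)
  rw [translate_preimage] at this
  exact this

def monoF (β : Fin n →₀ ℕ) : En n → ℝ := fun u => ∏ i, u i ^ β i

lemma monoF_continuous (β : Fin n →₀ ℕ) : Continuous (monoF β) :=
  continuous_finset_prod _ fun i _ => ((EuclideanSpace.proj (𝕜 := ℝ) i).continuous).pow _

def degF (β : Fin n →₀ ℕ) : ℕ := ∑ i, β i

lemma degF_eq_sum (β : Fin n →₀ ℕ) : β.sum (fun _ e => e) = degF β := by
  rw [degF, Finsupp.sum_fintype]
  intro i; rfl

lemma smul_cube {r : ℝ} (hr : 0 < r) : (r • cube (0 : En n) 1 : Set (En n)) = cube 0 r := by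
  ext y
  rw [Set.mem_smul_set_iff_inv_smul_mem₀ hr.ne']
  simp only [cube, Set.mem_setOf_eq, PiLp.smul_apply, PiLp.zero_apply, smul_eq_mul]
  refine forall_congr' fun i => ?_
  rw [sub_zero, sub_zero, abs_mul, abs_inv, abs_of_pos hr]
  rw [inv_mul_le_iff₀ hr]  -- |y i| * r⁻¹ ≤ 1/2 ↔ ...
  constructor
  · intro h1; linarith [h1]
  · intro h1; linarith [h1]

lemma monoF_smul (β : Fin n →₀ ℕ) (t : ℝ) (u : En n) :
    monoF β (t • u) = t ^ degF β * monoF β u := by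
  unfold monoF degF
  rw [← Finset.prod_pow_eq_pow_sum, ← Finset.prod_mul_distrib]
  refine Finset.prod_congr rfl fun i _ => ?_
  rw [PiLp.smul_apply, smul_eq_mul, mul_pow]

lemma integral_monoF_scale (β : Fin n →₀ ℕ) {r : ℝ} (hr : 0 < r) :
    ∫ u in cube (0 : En n) r, monoF β u
      = r ^ (n + degF β) * ∫ u in cube (0 : En n) 1, monoF β u := by
  have h := MeasureTheory.Measure.setIntegral_comp_smul_of_pos (volume : Measure (En n))
    (monoF β) (cube (0 : En n) 1) hr
  rw [smul_cube hr] at h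
  have h2 : ∫ u in cube (0 : En n) 1, monoF β (r • u)
      = r ^ degF β * ∫ u in cube (0 : En n) 1, monoF β u := by
    rw [← integral_const_mul]
    exact integral_congr_ae (ae_of_all _ fun u => monoF_smul β r u)
  rw [h2] at h
  have hrn : (r : ℝ) ^ Module.finrank ℝ (En n) = r ^ n := by
    rw [finrank_euclideanSpace_fin]
  rw [hrn, smul_eq_mul] at h
  have hrn0 : (r : ℝ) ^ n ≠ 0 := pow_ne_zero _ hr.ne'
  field_simp at h
  rw [pow_add]
  nlinarith [h]


lemma lintegral_abs_le_eta (hq : 1 < q) {γ : ℝ} {P : En n → ℝ} (hP : Measurable P)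
    (x₀ : En n) {r : ℝ} (hr : 0 < r) :
    ∫⁻ y in cube x₀ r, ENNReal.ofReal |P y|
      ≤ volume (cube x₀ r) * ENNReal.ofReal (r ^ γ) * eta q γ P x₀ := by
  have hq0 : 0 < q := lt_trans one_pos hq
  have hconj : Real.HolderConjugate q (Real.conjExponent q) :=
    Real.HolderConjugate.conjExponent hq
  set q' := Real.conjExponent q with hq'
  have step1 : ∫⁻ y in cube x₀ r, ENNReal.ofReal |P y|
      ≤ (∫⁻ y in cube x₀ r, ENNReal.ofReal |P y| ^ q) ^ (1/q)
        * (∫⁻ y in cube x₀ r, (1:ℝ≥0∞) ^ q') ^ (1/q') := by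
    refine le_trans (le_of_eq (lintegral_congr fun y => (mul_one _).symm)) ?_
    exact ENNReal.lintegral_mul_le_Lp_mul_Lq _ hconj
      (hP.abs.ennreal_ofReal.aemeasurable) aemeasurable_const
  refine le_trans step1 ?_
  calc (∫⁻ y in cube x₀ r, ENNReal.ofReal |P y| ^ q) ^ (1/q)
        * (∫⁻ y in cube x₀ r, (1:ℝ≥0∞) ^ q') ^ (1/q')
    _ = (volume (cube x₀ r)) ^ (1/q) * lqQ q P (cube x₀ r)
        * (volume (cube x₀ r)) ^ (1/q') := by
        rw [J_eq_vol_mul_lqQ hq0 _ hr]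
        congr 1
        simp [ENNReal.one_rpow]
    _ ≤ (volume (cube x₀ r)) ^ (1/q) * (ENNReal.ofReal (r ^ γ) * eta q γ P x₀)
        * (volume (cube x₀ r)) ^ (1/q') := by
        refine mul_le_mul_left (mul_le_mul_right (lqQ_le_eta hr) _) _
    _ = volume (cube x₀ r) * ENNReal.ofReal (r ^ γ) * eta q γ P x₀ := by
        rw [mul_comm ((volume (cube x₀ r)) ^ (1/q)) _, mul_assoc,
          ← ENNReal.rpow_add _ _ (volume_cube_pos x₀ hr).ne' (volume_cube_lt_top x₀ r).ne]
        have : 1/q + 1/q' = 1 := by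
          have := hconj.inv_add_inv_eq_one
          rw [one_div, one_div, this]
        rw [this, ENNReal.rpow_one]
        ring

lemma monoF_add (α β : Fin n →₀ ℕ) (u : En n) :
    monoF (α + β) u = monoF α u * monoF β u := by
  unfold monoF
  rw [← Finset.prod_mul_distrib]
  refine Finset.prod_congr rfl fun i _ => ?_
  rw [Finsupp.add_apply, pow_add]

lemma degF_add (α β : Fin n →₀ ℕ) : degF (α + β) = degF α + degF β := by
  unfold degF
  rw [← Finset.sum_add_distrib]
  refine Finset.sum_congr rfl fun i _ => Finsupp.add_apply _ _ _

lemma poly_eta_fin_zero (hq : 1 < q) {γ : ℝ} {k : ℕ} (hγ : (k:ℝ) < γ)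
    {P : En n → ℝ} (hPoly : IsPolyDegLe k P) (x₀ : En n)
    (hfin : eta q γ P x₀ < ⊤) : ∀ x : En n, P x = 0 := by
  classical
  have hq0 : 0 < q := lt_trans one_pos hq
  have hPc : Continuous P := hPoly.continuous
  obtain ⟨p, hpd, hpe⟩ := hPoly
  set p' : MvPolynomial (Fin n) ℝ :=
    MvPolynomial.aeval (fun i => MvPolynomial.X i + MvPolynomial.C (x₀ i)) p with hp'
  have hdeg' : p'.totalDegree ≤ k := by
    refine le_trans (totalDegree_aeval_le _ (fun i => ?_) p) hpd
    refine le_trans (MvPolynomial.totalDegree_add _ _) ?_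
    rw [MvPolynomial.totalDegree_X, MvPolynomial.totalDegree_C]
    simp
  have heval' : ∀ u : En n, MvPolynomial.eval (fun i => u i) p' = P (x₀ + u) := by
    intro u
    have harg : (fun i => MvPolynomial.eval (fun i => u i)
        (MvPolynomial.X i + MvPolynomial.C (x₀ i))) = fun i => (x₀ + u) i := by
      funext i
      simp only [MvPolynomial.eval_add, MvPolynomial.eval_X, MvPolynomial.eval_C,
        PiLp.add_apply]
      ring
    rw [hp', eval_aeval', harg]
    exact (hpe (x₀ + u)).symm
  set c : (Fin n →₀ ℕ) → ℝ := fun β => MvPolynomial.coeff β p' with hc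
  set S : Finset (Fin n →₀ ℕ) := p'.support with hS
  have expand : ∀ u : En n, P (x₀ + u) = ∑ β ∈ S, c β * monoF β u := by
    intro u
    rw [← heval', MvPolynomial.eval_eq]
    refine Finset.sum_congr rfl fun β hβ => ?_
    show MvPolynomial.coeff β p' * ∏ i ∈ β.support, u i ^ β i
      = MvPolynomial.coeff β p' * ∏ i, u i ^ β i
    congr 1
    exact Finset.prod_subset (Finset.subset_univ _) (fun i _ hni => by
      rw [Finsupp.notMem_support_iff.1 hni, pow_zero])
  set Qf : En n → ℝ := fun u => P (x₀ + u) with hQf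
  have hQfc : Continuous Qf := hPc.comp (continuous_const.add continuous_id)
  set m1 : (Fin n →₀ ℕ) → ℝ := fun β => ∫ u in cube (0 : En n) 1, monoF β u with hm1
  set A : ℝ := (eta q γ P x₀).toReal with hA
  have hA0 : 0 ≤ A := ENNReal.toReal_nonneg
  have keyid : ∀ (α : Fin n →₀ ℕ) (r : ℝ), 0 < r →
      ∫ u in cube (0:En n) r, Qf u * monoF α u
        = ∑ β ∈ S, c β * (r ^ (n + degF (α + β)) * m1 (α + β)) := by
    intro α r hr
    have hcong : ∀ u ∈ cube (0:En n) r,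
        Qf u * monoF α u = ∑ β ∈ S, c β * monoF (α + β) u := by
      intro u _
      rw [hQf]
      show P (x₀ + u) * monoF α u = _
      rw [expand u, Finset.sum_mul]
      refine Finset.sum_congr rfl fun β hβ => ?_
      rw [monoF_add]
      ring
    rw [setIntegral_congr_fun (measurableSet_cube _ _) hcong,
      integral_finset_sum _ (f := fun β u => c β * monoF (α + β) u) (fun β _ =>
        (continuous_const.mul (monoF_continuous _)).continuousOn.integrableOn_compact
          (isCompact_cube _ _))]
    refine Finset.sum_congr rfl fun β hβ => ?_
    rw [integral_const_mul, integral_monoF_scale _ hr]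
  have hmb : ∀ (α : Fin n →₀ ℕ) (r : ℝ), 0 < r → r ≤ 1 →
      |∫ u in cube (0:En n) r, Qf u * monoF α u| ≤ A * (r ^ (n + degF α) * r ^ γ) := by
    intro α r hr hr1
    have habs : |∫ u in cube (0:En n) r, Qf u * monoF α u|
        ≤ ∫ u in cube (0:En n) r, |Qf u * monoF α u| := by
      have := norm_integral_le_integral_norm (f := fun u => Qf u * monoF α u)
        (μ := volume.restrict (cube (0:En n) r))
      simpa only [Real.norm_eq_abs] using this
    have hstep2 : ∫ u in cube (0:En n) r, |Qf u * monoF α u|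
        ≤ ∫ u in cube (0:En n) r, |Qf u| * r ^ (degF α) := by
      refine setIntegral_mono_on
        ((hQfc.mul (monoF_continuous α)).abs.continuousOn.integrableOn_compact
          (isCompact_cube _ _))
        ((hQfc.abs.mul continuous_const).continuousOn.integrableOn_compact
          (isCompact_cube _ _))
        (measurableSet_cube _ _) (fun u hu => ?_)
      rw [abs_mul]
      refine mul_le_mul_of_nonneg_left ?_ (abs_nonneg _)
      have hcoord : ∀ i, |u i| ≤ r := by
        intro i
        have := hu i
        rw [PiLp.zero_apply, sub_zero] at this
        linarith
      calc |monoF α u| = ∏ i, |u i| ^ α i := by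
            unfold monoF
            rw [Finset.abs_prod]
            exact Finset.prod_congr rfl fun i _ => abs_pow _ _
        _ ≤ ∏ i, r ^ α i :=
            Finset.prod_le_prod (fun i _ => by positivity)
              (fun i _ => pow_le_pow_left₀ (abs_nonneg _) (hcoord i) _)
        _ = r ^ degF α := Finset.prod_pow_eq_pow_sum _ _ _
    have hstep3 : ∫ u in cube (0:En n) r, |Qf u| * r ^ (degF α)
        = (∫ u in cube (0:En n) r, |Qf u|) * r ^ (degF α) := integral_mul_const _ _
    have hstep4 : ∫ u in cube (0:En n) r, |Qf u| ≤ r ^ n * r ^ γ * A := by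
      have hint : IntegrableOn (fun u => |Qf u|) (cube (0:En n) r) volume :=
        hQfc.abs.continuousOn.integrableOn_compact (isCompact_cube _ _)
      have hofReal : ENNReal.ofReal (∫ u in cube (0:En n) r, |Qf u|)
          = ∫⁻ u in cube (0:En n) r, ENNReal.ofReal |Qf u| :=
        ofReal_integral_eq_lintegral_ofReal hint (ae_of_all _ fun u => abs_nonneg _)
      have htrans : ∫⁻ u in cube (0:En n) r, ENNReal.ofReal |Qf u|
          = ∫⁻ y in cube x₀ r, ENNReal.ofReal |P y| :=
        setLIntegral_translate x₀ r (fun y => ENNReal.ofReal |P y|)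
      have hupper := lintegral_abs_le_eta hq (γ := γ) hPc.measurable x₀ hr
      have hne : volume (cube x₀ r) * ENNReal.ofReal (r ^ γ) * eta q γ P x₀ ≠ ⊤ :=
        (ENNReal.mul_lt_top (ENNReal.mul_lt_top (volume_cube_lt_top x₀ r)
          ENNReal.ofReal_lt_top) hfin).ne
      have hle := (ENNReal.ofReal_le_iff_le_toReal hne).1
        (by rw [hofReal, htrans]; exact hupper)
      refine le_trans hle (le_of_eq ?_)
      rw [ENNReal.toReal_mul, ENNReal.toReal_mul, volume_cube, ENNReal.toReal_pow,
        ENNReal.toReal_ofReal hr.le, ENNReal.toReal_ofReal (Real.rpow_nonneg hr.le _)]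
    calc |∫ u in cube (0:En n) r, Qf u * monoF α u|
        ≤ (∫ u in cube (0:En n) r, |Qf u|) * r ^ (degF α) := by
          rw [← hstep3]; exact le_trans habs hstep2
      _ ≤ (r ^ n * r ^ γ * A) * r ^ (degF α) :=
          mul_le_mul_of_nonneg_right hstep4 (by positivity)
      _ = A * (r ^ (n + degF α) * r ^ γ) := by rw [pow_add]; ring
  have main : ∀ d : ℕ, ∀ β₀, β₀ ∈ S → degF β₀ = d → False := by
    intro d
    induction d using Nat.strong_induction_on with
    | _ d IH =>
    intro β₀ hβ₀ hd0
    have hge : ∀ β ∈ S, d ≤ degF β := fun β hβ =>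
      not_lt.1 fun hlt => IH (degF β) hlt β hβ rfl
    have hdγ : (d : ℝ) < γ := by
      have h1 : degF β₀ ≤ k := by
        rw [← degF_eq_sum β₀]
        exact le_trans (MvPolynomial.le_totalDegree hβ₀) hdeg'
      have h2 : d ≤ k := hd0 ▸ h1
      calc (d:ℝ) ≤ k := by exact_mod_cast h2
        _ < γ := hγ
    set Sd : Finset (Fin n →₀ ℕ) := S.filter (fun β => degF β = d) with hSd
    have horth : ∀ α : Fin n →₀ ℕ, degF α = d → ∑ β ∈ Sd, c β * m1 (α + β) = 0 := by
      intro α hα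
      set ψ : ℝ → ℝ := fun r => ∑ β ∈ S, c β * (r ^ (degF β - d) * m1 (α + β)) with hψ
      have hψcont : Continuous ψ := by
        refine continuous_finset_sum _ fun β _ => ?_
        exact continuous_const.mul ((continuous_pow _).mul continuous_const)
      have hid : ∀ r : ℝ, 0 < r →
          ∫ u in cube (0:En n) r, Qf u * monoF α u = r ^ (n + 2*d) * ψ r := by
        intro r hr
        rw [keyid α r hr, Finset.mul_sum]
        refine Finset.sum_congr rfl fun β hβ => ?_
        have he : n + degF (α + β) = (n + 2*d) + (degF β - d) := by
          have h1 : degF (α + β) = degF α + degF β := degF_add α β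
          have h2 := hge β hβ
          omega
        rw [he, pow_add]
        ring
      have hψ0 : ψ 0 = ∑ β ∈ Sd, c β * m1 (α + β) := by
        rw [hψ]
        show ∑ β ∈ S, c β * ((0:ℝ) ^ (degF β - d) * m1 (α + β)) = _
        rw [← Finset.sum_filter_add_sum_filter_not S (fun β => degF β = d)]
        have hz : ∑ β ∈ S.filter (fun β => ¬ degF β = d),
            c β * ((0:ℝ) ^ (degF β - d) * m1 (α+β)) = 0 := by
          refine Finset.sum_eq_zero fun β hβ => ?_
          obtain ⟨hβS, hβne⟩ := Finset.mem_filter.1 hβ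
          have hpos : degF β - d ≠ 0 := by have := hge β hβS; omega
          rw [zero_pow hpos]
          ring
        rw [hz, add_zero]
        refine Finset.sum_congr rfl fun β hβ => ?_
        have h0 : degF β - d = 0 := by
          obtain ⟨_, h2⟩ := Finset.mem_filter.1 hβ; omega
        rw [h0, pow_zero, one_mul]
      have hbound : ∀ r : ℝ, 0 < r → r ≤ 1 → |ψ r| ≤ A * r ^ (γ - (d:ℝ)) := by
        intro r hr hr1
        have h1 := hmb α r hr hr1
        rw [hid r hr, abs_mul, abs_pow, abs_of_pos hr, hα] at h1
        have hrp : (0:ℝ) < r ^ (n + 2*d) := by positivity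
        have h2 : |ψ r| ≤ A * (r ^ (n + d) * r ^ γ) / r ^ (n + 2*d) := by
          rw [le_div_iff₀ hrp]
          calc |ψ r| * r ^ (n + 2*d) = r ^ (n + 2*d) * |ψ r| := mul_comm _ _
            _ ≤ A * (r ^ (n + d) * r ^ γ) := h1
        refine le_trans h2 (le_of_eq ?_)
        rw [mul_div_assoc]
        congr 1
        rw [← Real.rpow_natCast r (n + d), ← Real.rpow_natCast r (n + 2*d),
          ← Real.rpow_add hr, ← Real.rpow_sub hr]
        congr 1
        push_cast
        ring
      have hten1 : Tendsto (fun r => |ψ r|) (𝓝[>] (0:ℝ)) (𝓝 |ψ 0|) :=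
        ((hψcont.abs).tendsto 0).mono_left nhdsWithin_le_nhds
      have hten2 : Tendsto (fun r : ℝ => A * r ^ (γ - (d:ℝ))) (𝓝[>] (0:ℝ)) (𝓝 0) := by
        have hpos : 0 < γ - (d:ℝ) := by linarith
        have h3 : Tendsto (fun r : ℝ => r ^ (γ - (d:ℝ))) (𝓝[>] (0:ℝ))
            (𝓝 ((0:ℝ) ^ (γ - (d:ℝ)))) :=
          ((Real.continuousAt_rpow_const 0 _ (Or.inr hpos.le)).tendsto).mono_left
            nhdsWithin_le_nhds
        rw [Real.zero_rpow hpos.ne'] at h3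
        simpa using h3.const_mul A
      have hev : ∀ᶠ r in 𝓝[>] (0:ℝ), |ψ r| ≤ A * r ^ (γ - (d:ℝ)) := by
        filter_upwards [Ioc_mem_nhdsGT_of_mem (Set.mem_Ico.2 ⟨le_refl (0:ℝ), one_pos⟩)]
          with r hr
        exact hbound r hr.1 hr.2
      have hle0 := le_of_tendsto_of_tendsto hten1 hten2 hev
      have habs0 : ψ 0 = 0 := abs_eq_zero.1 (le_antisymm hle0 (abs_nonneg _))
      rw [← hψ0]
      exact habs0
    set H : En n → ℝ := fun u => ∑ β ∈ Sd, c β * monoF β u with hH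
    have hHcont : Continuous H :=
      continuous_finset_sum _ fun β _ => continuous_const.mul (monoF_continuous β)
    have hH2 : ∫ u in cube (0:En n) 1, H u ^ 2 = 0 := by
      have hexp : ∀ u ∈ cube (0:En n) 1,
          H u ^ 2 = ∑ α ∈ Sd, ∑ β ∈ Sd, (c α * c β) * monoF (α + β) u := by
        intro u _
        rw [hH, sq]
        show (∑ α ∈ Sd, c α * monoF α u) * (∑ β ∈ Sd, c β * monoF β u) = _
        rw [Finset.sum_mul_sum]
        refine Finset.sum_congr rfl fun α _ => Finset.sum_congr rfl fun β _ => ?_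
        rw [monoF_add]
        ring
      rw [setIntegral_congr_fun (measurableSet_cube _ _) hexp,
        integral_finset_sum _ (f := fun α u => ∑ β ∈ Sd, c α * c β * monoF (α + β) u) (fun α _ => integrable_finset_sum _ fun β _ =>
          (continuous_const.mul (monoF_continuous _)).continuousOn.integrableOn_compact
            (isCompact_cube _ _))]
      have hinner : ∀ α ∈ Sd,
          ∫ u in cube (0:En n) 1, (∑ β ∈ Sd, (c α * c β) * monoF (α + β) u)
            = c α * ∑ β ∈ Sd, c β * m1 (α + β) := by
        intro α _
        rw [integral_finset_sum _ (f := fun β u => c α * c β * monoF (α + β) u) (fun β _ =>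
          (continuous_const.mul (monoF_continuous _)).continuousOn.integrableOn_compact
            (isCompact_cube _ _)), Finset.mul_sum]
        refine Finset.sum_congr rfl fun β _ => ?_
        rw [integral_const_mul]
        ring
      rw [Finset.sum_congr rfl hinner]
      refine Finset.sum_eq_zero fun α hα => ?_
      rw [horth α (Finset.mem_filter.1 hα).2, mul_zero]
    have hae0 : ∀ᵐ u ∂(volume.restrict (cube (0:En n) 1)), H u ^ 2 = 0 := by
      have := (setIntegral_eq_zero_iff_of_nonneg_ae
        (ae_of_all _ fun u => sq_nonneg (H u))
        (((hHcont.pow 2)).continuousOn.integrableOn_compact (isCompact_cube _ _))).1 hH2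
      filter_upwards [this] with u hu
      simpa using hu
    have hbox : ∀ u : En n, (∀ i, |u i| < 1/2) → H u = 0 := by
      intro u₀ hu₀
      by_contra hne
      set W : Set (En n) := {u | (∀ i, |u i| < 1/2) ∧ H u ≠ 0} with hW
      have hWopen : IsOpen W := by
        have h1 : IsOpen {u : En n | ∀ i, |u i| < 1/2} := by
          have he : {u : En n | ∀ i, |u i| < 1/2} = ⋂ i, {u : En n | |u i| < 1/2} := by
            ext u; simp
          rw [he]
          refine isOpen_iInter_of_finite fun i => ?_
          exact isOpen_lt ((EuclideanSpace.proj (𝕜 := ℝ) i).continuous).abs continuous_const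
        have h2 : IsOpen {u : En n | H u ≠ 0} := by
          have he : {u : En n | H u ≠ 0} = H ⁻¹' ({0}ᶜ) := rfl
          rw [he]
          exact (isOpen_compl_iff.2 isClosed_singleton).preimage hHcont
        have he : W = {u : En n | ∀ i, |u i| < 1/2} ∩ {u : En n | H u ≠ 0} := rfl
        rw [he]
        exact h1.inter h2
      have hWnull : volume W = 0 := by
        have hmeasN : MeasurableSet {u : En n | ¬ H u ^ 2 = 0} := by
          have he : {u : En n | ¬ H u ^ 2 = 0} = (fun u => H u ^ 2) ⁻¹' ({0}ᶜ) := rfl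
          rw [he]
          exact (hHcont.pow 2).measurable (measurableSet_singleton 0).compl
        have h3 := ae_iff.1 hae0
        rw [Measure.restrict_apply hmeasN] at h3
        refine measure_mono_null (fun u hu => ?_) h3
        refine ⟨?_, ?_⟩
        · exact pow_ne_zero 2 hu.2
        · intro i
          have := hu.1 i
          rw [PiLp.zero_apply, sub_zero]
          linarith
      exact absurd hWnull (hWopen.measure_pos volume ⟨u₀, hu₀, hne⟩).ne'
    have hall : ∀ u : En n, H u = 0 := by
      intro u
      set t : ℝ := (2 * (dist u 0 + 1))⁻¹ with ht
      have hd0' : (0:ℝ) ≤ dist u 0 := dist_nonneg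
      have ht0 : 0 < t := by rw [ht]; positivity
      have htu : ∀ i, |(t • u) i| < 1/2 := by
        intro i
        rw [PiLp.smul_apply, smul_eq_mul, abs_mul, abs_of_pos ht0]
        have h1 : |u i| ≤ dist u 0 := by
          have := coord_dist_le u 0 i
          simpa using this
        have h2 : t * (dist u 0 + 1) = 1/2 := by
          rw [ht]
          field_simp
        nlinarith [mul_le_mul_of_nonneg_left h1 ht0.le]
      have h0 : H (t • u) = 0 := hbox _ htu
      have hhom : H (t • u) = t ^ d * H u := by
        rw [hH]
        show ∑ β ∈ Sd, c β * monoF β (t • u) = t ^ d * ∑ β ∈ Sd, c β * monoF β u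
        rw [Finset.mul_sum]
        refine Finset.sum_congr rfl fun β hβ => ?_
        rw [monoF_smul, (Finset.mem_filter.1 hβ).2]
        ring
      rw [hhom] at h0
      exact (mul_eq_zero.1 h0).resolve_left (pow_ne_zero d ht0.ne')
    set Hp : MvPolynomial (Fin n) ℝ := ∑ β ∈ Sd, MvPolynomial.monomial β (c β) with hHp
    have hevalHp : ∀ u : En n, MvPolynomial.eval (fun i => u i) Hp = H u := by
      intro u
      rw [hHp, map_sum, hH]
      show _ = ∑ β ∈ Sd, c β * monoF β u
      refine Finset.sum_congr rfl fun β _ => ?_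
      rw [MvPolynomial.eval_monomial]
      congr 1
      rw [Finsupp.prod]
      unfold monoF
      exact Finset.prod_subset (Finset.subset_univ _) (fun i _ hni => by
        rw [Finsupp.notMem_support_iff.1 hni, pow_zero])
    have hHp0 : Hp = 0 := by
      apply MvPolynomial.funext
      intro x
      rw [map_zero]
      have h5 := hevalHp ((WithLp.equiv 2 (Fin n → ℝ)).symm x)
      rw [hall] at h5
      have hxx : (fun i => ((WithLp.equiv 2 (Fin n → ℝ)).symm x) i) = x := funext fun i => rfl
      rw [hxx] at h5
      exact h5
    have hc0 : c β₀ = 0 := by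
      have h6 : MvPolynomial.coeff β₀ Hp = c β₀ := by
        rw [hHp, MvPolynomial.coeff_sum]
        have h7 : ∀ β ∈ Sd, MvPolynomial.coeff β₀ (MvPolynomial.monomial β (c β))
            = if β = β₀ then c β else 0 := fun β _ => MvPolynomial.coeff_monomial _ _ _
        rw [Finset.sum_congr rfl h7, Finset.sum_ite_eq' Sd β₀ c,
          if_pos (Finset.mem_filter.2 ⟨hβ₀, hd0⟩)]
      rw [hHp0] at h6
      simpa using h6.symm
    exact MvPolynomial.mem_support_iff.1 hβ₀ hc0
  have hSempty : S = ∅ := Finset.eq_empty_iff_forall_notMem.2 fun β hβ => main (degF β) β hβ rfl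
  have hp0 : p' = 0 := MvPolynomial.support_eq_empty.1 (by rw [← hS]; exact hSempty)
  intro x
  have h8 := heval' (x - x₀)
  rw [add_sub_cancel, hp0, map_zero] at h8
  exact h8.symm

lemma lqQ_zero (hq0 : 0 < q) (Q : Set (En n)) : lqQ q (fun _ => (0:ℝ)) Q = 0 := by
  unfold lqQ
  simp only [abs_zero, Real.zero_rpow hq0.ne', ENNReal.ofReal_zero, lintegral_const,
    zero_mul, mul_zero]
  rw [ENNReal.zero_rpow_of_pos (one_div_pos.mpr hq0)]

lemma eta_zero (hq0 : 0 < q) {γ : ℝ} (x : En n) : eta q γ (fun _ => (0:ℝ)) x = 0 := by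
  refine le_antisymm (iSup₂_le fun r hr => ?_) zero_le
  rw [lqQ_zero hq0, mul_zero]

lemma eta_neg {γ : ℝ} (f : En n → ℝ) (x : En n) :
    eta q γ (fun y => -(f y)) x = eta q γ f x := by
  have hQ : ∀ Q : Set (En n), lqQ q (fun y => -(f y)) Q = lqQ q f Q := by
    intro Q
    unfold lqQ
    congr 2
    exact lintegral_congr fun y => by rw [abs_neg]
  unfold eta
  exact iSup_congr fun r => iSup_congr fun hr => by rw [hQ]

end Helpers

/-- **Lemma.** If `Σ_j N_{q,γ}(G_j;x₀) < ∞` then (i) `Σ_j G_j` converges in `E^q_k` to some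
`G` with `N_{q,γ}(G;x₀) ≤ Σ_j N_{q,γ}(G_j;x₀)`; (ii) if each `g_j` is the unique
representative of `G_j` with `η_{q,γ}(g_j;x₀) = N_{q,γ}(G_j;x₀)`, then `Σ_j g_j` converges in
`L^q_loc` to the unique representative `g'` of `G` with `η_{q,γ}(g';x₀) = N_{q,γ}(G;x₀)`. -/
theorem series_convergence_CalderonHardy
    (n : ℕ) (q γ : ℝ) (k : ℕ) (hq : 1 < q)
    (hγ0 : (k : ℝ) < γ) (hγ1 : γ ≤ (k : ℝ) + 1)
    (gs : ℕ → En n → ℝ) (hgs : ∀ j, MemLqLoc q (gs j)) (x₀ : En n)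
    (hsum : ∑' j, Nmax q γ k (gs j) x₀ < ⊤) :
    ∃ g : En n → ℝ, MemLqLoc q g ∧
      (∀ (z : En n) (s : ℝ), 0 < s →
        Tendsto (fun M => qnormQ q k (fun y => g y - ∑ j ∈ Finset.range M, gs j y) (cube z s))
          atTop (𝓝 0)) ∧
      Nmax q γ k g x₀ ≤ ∑' j, Nmax q γ k (gs j) x₀ ∧
      ((∀ j, eta q γ (gs j) x₀ = Nmax q γ k (gs j) x₀) →
        ∃ g' : En n → ℝ, MemLqLoc q g' ∧
          (∃ P : En n → ℝ, IsPolyDegLe k P ∧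
            ∀ᵐ y ∂(volume : Measure (En n)), g' y = g y + P y) ∧
          (∀ (z : En n) (s : ℝ), 0 < s →
            Tendsto (fun M => lqQ q (fun y => g' y - ∑ j ∈ Finset.range M, gs j y) (cube z s))
              atTop (𝓝 0)) ∧
          eta q γ g' x₀ = Nmax q γ k g' x₀) := by
  classical
  have hq0 : 0 < q := lt_trans one_pos hq
  have hNfin : ∀ j, Nmax q γ k (gs j) x₀ ≠ ⊤ :=
    fun j => (lt_of_le_of_lt (ENNReal.le_tsum j) hsum).ne
  -- choose near-optimal polynomial representatives
  have hchoice : ∀ j : ℕ, ∃ Pp : En n → ℝ, IsPolyDegLe k Pp ∧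
      eta q γ (fun y => gs j y - Pp y) x₀
        ≤ Nmax q γ k (gs j) x₀ + ENNReal.ofReal ((1/2)^j) ∧
      ((eta q γ (gs j) x₀ = Nmax q γ k (gs j) x₀) → Pp = fun _ => 0) := by
    intro j
    by_cases hcase : eta q γ (gs j) x₀ ≤ Nmax q γ k (gs j) x₀ + ENNReal.ofReal ((1/2)^j)
    · refine ⟨fun _ => 0, isPolyDegLe_zero, ?_, fun _ => rfl⟩
      simpa using hcase
    · have hlt : Nmax q γ k (gs j) x₀
          < Nmax q γ k (gs j) x₀ + ENNReal.ofReal ((1/2)^j) :=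
        ENNReal.lt_add_right (hNfin j)
          (by simp only [ne_eq, ENNReal.ofReal_eq_zero, not_le]; positivity)
      obtain ⟨⟨Pp, hPp⟩, hPlt⟩ := iInf_lt_iff.1 hlt
      exact ⟨Pp, hPp, hPlt.le, fun heq => absurd (heq ▸ le_self_add) hcase⟩
  choose Pc hPc hPeta hPzero using hchoice
  set h : ℕ → En n → ℝ := fun j y => gs j y - Pc j y with hh
  have hmeas : ∀ j, Measurable (h j) := fun j => ((hgs j).1).sub (hPc j).measurable
  set η : ℕ → ℝ≥0∞ := fun j => eta q γ (h j) x₀ with hη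
  have hgeo : ∑' j, ENNReal.ofReal ((1/2:ℝ)^j) < ⊤ := by
    have hc : ∀ j : ℕ, ENNReal.ofReal ((1/2:ℝ)^j) = (ENNReal.ofReal (1/2))^j :=
      fun j => ENNReal.ofReal_pow (by norm_num) j
    rw [tsum_congr hc, ENNReal.tsum_geometric]
    refine ENNReal.inv_lt_top.2 ?_
    rw [tsub_pos_iff_lt]
    exact ENNReal.ofReal_lt_one.2 (by norm_num)
  have hE : ∑' j, η j ≠ ⊤ := by
    refine ne_of_lt (lt_of_le_of_lt (ENNReal.tsum_le_tsum hPeta) ?_)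
    rw [ENNReal.tsum_add]
    exact ENNReal.add_lt_top.2 ⟨hsum, hgeo⟩
  obtain ⟨g, hgmeas, hgdom⟩ := construct hq hmeas hE
  have hdomM : ∀ M, ∀ᵐ y ∂(volume : Measure (En n)),
      ENNReal.ofReal |g y - ∑ j ∈ Finset.range M, h j y|
        ≤ ∑' j, ENNReal.ofReal |h (j + M) y| :=
    fun M => hgdom.mono fun y hy => hy M
  have htail0 : Tendsto (fun M => ∑' j, η (j + M)) atTop (𝓝 0) :=
    ENNReal.tendsto_sum_nat_add _ hE
  have htailfin : ∀ M, ∑' j, η (j + M) ≠ ⊤ := by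
    intro M
    refine ne_of_lt (lt_of_le_of_lt ?_ (lt_top_iff_ne_top.2 hE))
    exact ENNReal.tsum_comp_le_tsum_of_injective (add_left_injective M) η
  have hbd : ∀ (z : En n) (s : ℝ), 0 < s → ∃ K : ℝ≥0∞, K ≠ ⊤ ∧ ∀ M,
      lqQ q (fun y => g y - ∑ j ∈ Finset.range M, h j y) (cube z s)
        ≤ K * ∑' j, η (j + M) := by
    intro z s hs
    have hdz : (0:ℝ) ≤ dist z x₀ := dist_nonneg
    set r : ℝ := s + 2 * dist z x₀ + 1 with hr'
    have hr : 0 < r := by rw [hr']; linarith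
    have hsub : cube z s ⊆ cube x₀ r := cube_subset_cube (by rw [hr']; linarith)
    refine ⟨((volume (cube z s))⁻¹)^(1/q) * ((volume (cube x₀ r))^(1/q)
      * ENNReal.ofReal (r^γ)), ?_, ?_⟩
    · refine ENNReal.mul_ne_top ?_ (ENNReal.mul_ne_top ?_ ENNReal.ofReal_ne_top)
      · exact ENNReal.rpow_ne_top_of_nonneg (one_div_nonneg.mpr hq0.le)
          (ENNReal.inv_ne_top.2 (volume_cube_pos z hs).ne')
      · exact ENNReal.rpow_ne_top_of_nonneg (one_div_nonneg.mpr hq0.le)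
          (volume_cube_lt_top x₀ r).ne
    · intro M
      refine le_trans (tail_bound (γ := γ) hq hmeas M (hdomM M) hs hr hsub) (le_of_eq ?_)
      ring
  have hlq_tendsto : ∀ (z : En n) (s : ℝ), 0 < s →
      Tendsto (fun M => lqQ q (fun y => g y - ∑ j ∈ Finset.range M, h j y) (cube z s))
        atTop (𝓝 0) := by
    intro z s hs
    obtain ⟨K, hKne, hK⟩ := hbd z s hs
    have h1 : Tendsto (fun M => K * ∑' j, η (j + M)) atTop (𝓝 (K * 0)) :=
      ENNReal.Tendsto.const_mul htail0 (Or.inr hKne)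
    rw [mul_zero] at h1
    exact tendsto_of_tendsto_of_tendsto_of_le_of_le tendsto_const_nhds h1
      (fun M => zero_le) (fun M => hK M)
  have hetaM : ∀ M, eta q γ (fun y => g y - ∑ j ∈ Finset.range M, h j y) x₀
      ≤ ∑' j, η (j + M) := by
    intro M
    refine eta_le fun r hr => ?_
    refine le_trans (tail_bound (γ := γ) hq hmeas M (hdomM M) hr hr (le_refl _)) ?_
    rw [← mul_assoc, vol_rpow_cancel hr (one_div_nonneg.mpr hq0.le), one_mul]
  have hgloc : MemLqLoc q g := by
    refine ⟨hgmeas, fun z s hs => ?_⟩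
    refine lintegral_lt_top_of_lqQ hq0 hs ?_
    obtain ⟨K, hKne, hK⟩ := hbd z s hs
    have h0 : (fun y => g y - ∑ j ∈ Finset.range 0, h j y) = g := funext fun y => by simp
    have h1 := hK 0
    rw [h0] at h1
    exact lt_of_le_of_lt h1 (ENNReal.mul_lt_top (lt_top_iff_ne_top.2 hKne)
      (lt_top_iff_ne_top.2 (htailfin 0)))
  -- the qnormQ convergence
  have hqnorm : ∀ (z : En n) (s : ℝ), 0 < s →
      Tendsto (fun M => qnormQ q k (fun y => g y - ∑ j ∈ Finset.range M, gs j y) (cube z s))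
        atTop (𝓝 0) := by
    intro z s hs
    have hub : ∀ M, qnormQ q k (fun y => g y - ∑ j ∈ Finset.range M, gs j y) (cube z s)
        ≤ lqQ q (fun y => g y - ∑ j ∈ Finset.range M, h j y) (cube z s) := by
      intro M
      have hpoly : IsPolyDegLe k (fun y => -(∑ j ∈ Finset.range M, Pc j y)) :=
        (IsPolyDegLe.sum hPc M).neg
      have hfe : (fun y => (g y - ∑ j ∈ Finset.range M, gs j y)
          - (-(∑ j ∈ Finset.range M, Pc j y)))
          = fun y => g y - ∑ j ∈ Finset.range M, h j y := by
        funext y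
        rw [hh]
        simp only [Finset.sum_sub_distrib]
        ring
      have := iInf_le (fun (Pb : {Pb : En n → ℝ // IsPolyDegLe k Pb}) =>
        lqQ q (fun y => (g y - ∑ j ∈ Finset.range M, gs j y) - Pb.1 y) (cube z s))
        ⟨_, hpoly⟩
      rw [hfe] at this
      exact this
    exact tendsto_of_tendsto_of_tendsto_of_le_of_le tendsto_const_nhds
      (hlq_tendsto z s hs) (fun M => zero_le) hub
  -- the Nmax estimate
  have hNsum : ∀ M : ℕ, Nmax q γ k (fun y => ∑ j ∈ Finset.range M, gs j y) x₀
      ≤ ∑ j ∈ Finset.range M, Nmax q γ k (gs j) x₀ := by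
    intro M
    induction M with
    | zero =>
      simp only [Finset.range_zero, Finset.sum_empty]
      exact le_trans (Nmax_le_eta x₀) (le_of_eq (eta_zero hq0 x₀))
    | succ M ih =>
      simp only [Finset.sum_range_succ]
      refine le_trans (Nmax_add_le hq.le
        (Finset.measurable_sum _ fun j _ => (hgs j).1) (hgs M).1 x₀) ?_
      exact add_le_add ih (le_refl _)
  have hNbound : Nmax q γ k g x₀ ≤ ∑' j, Nmax q γ k (gs j) x₀ := by
    have key : ∀ M, Nmax q γ k g x₀
        ≤ (∑' j, Nmax q γ k (gs j) x₀) + ∑' j, η (j + M) := by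
      intro M
      have hdecomp : g = fun y => (g y - ∑ j ∈ Finset.range M, gs j y)
          + ∑ j ∈ Finset.range M, gs j y := funext fun y => by ring
      have hmeas1 : Measurable fun y => g y - ∑ j ∈ Finset.range M, gs j y :=
        hgmeas.sub (Finset.measurable_sum _ fun j _ => (hgs j).1)
      have hstep : Nmax q γ k (fun y => g y - ∑ j ∈ Finset.range M, gs j y) x₀
          ≤ ∑' j, η (j + M) := by
        have hpoly : IsPolyDegLe k (fun y => -(∑ j ∈ Finset.range M, Pc j y)) :=
          (IsPolyDegLe.sum hPc M).neg
        refine le_trans (Nmax_le_eta_sub hpoly x₀) ?_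
        have hfe : (fun y => (g y - ∑ j ∈ Finset.range M, gs j y)
            - (-(∑ j ∈ Finset.range M, Pc j y)))
            = fun y => g y - ∑ j ∈ Finset.range M, h j y := by
          funext y
          rw [hh]
          simp only [Finset.sum_sub_distrib]
          ring
        rw [hfe]
        exact hetaM M
      calc Nmax q γ k g x₀
          = Nmax q γ k (fun y => (g y - ∑ j ∈ Finset.range M, gs j y)
            + ∑ j ∈ Finset.range M, gs j y) x₀ := by rw [← hdecomp]
        _ ≤ Nmax q γ k (fun y => g y - ∑ j ∈ Finset.range M, gs j y) x₀
            + Nmax q γ k (fun y => ∑ j ∈ Finset.range M, gs j y) x₀ :=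
            Nmax_add_le hq.le hmeas1 (Finset.measurable_sum _ fun j _ => (hgs j).1) x₀
        _ ≤ (∑' j, η (j + M)) + ∑ j ∈ Finset.range M, Nmax q γ k (gs j) x₀ :=
            add_le_add hstep (hNsum M)
        _ ≤ (∑' j, Nmax q γ k (gs j) x₀) + ∑' j, η (j + M) := by
            rw [add_comm]
            exact add_le_add (ENNReal.sum_le_tsum _) (le_refl _)
    have hT : Tendsto (fun M => (∑' j, Nmax q γ k (gs j) x₀) + ∑' j, η (j + M)) atTop
        (𝓝 ((∑' j, Nmax q γ k (gs j) x₀) + 0)) := Tendsto.const_add _ htail0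
    rw [add_zero] at hT
    exact ge_of_tendsto' hT key
  refine ⟨g, hgloc, hqnorm, hNbound, ?_⟩
  -- Part (ii)
  intro heq
  have hPzero' : ∀ j, Pc j = fun _ => 0 := fun j => hPzero j (heq j)
  have hhgs : ∀ j, h j = gs j := by
    intro j
    funext y
    rw [hh]
    show gs j y - Pc j y = gs j y
    rw [hPzero' j]
    simp
  have hgsM : ∀ M : ℕ, (fun y => g y - ∑ j ∈ Finset.range M, gs j y)
      = fun y => g y - ∑ j ∈ Finset.range M, h j y := by
    intro M
    funext y
    congr 1
    exact Finset.sum_congr rfl fun j _ => by rw [hhgs j]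
  refine ⟨g, hgloc, ⟨fun _ => 0, isPolyDegLe_zero, ae_of_all _ fun y => by simp⟩, ?_, ?_⟩
  · intro z s hs
    have := hlq_tendsto z s hs
    convert this using 2 with M
    rw [hgsM M]
  · -- eta g = Nmax g
    have hgeta : eta q γ g x₀ ≤ ∑' j, η j := by
      have h0 : (fun y => g y - ∑ j ∈ Finset.range 0, h j y) = g := funext fun y => by simp
      have h1 := hetaM 0
      rw [h0] at h1
      refine le_trans h1 (le_of_eq (tsum_congr fun j => by rw [Nat.add_zero]))
    have hgfin : eta q γ g x₀ ≠ ⊤ := ne_of_lt (lt_of_le_of_lt hgeta (lt_top_iff_ne_top.2 hE))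
    refine le_antisymm ?_ (Nmax_le_eta x₀)
    refine le_iInf fun Pb => ?_
    obtain ⟨Pp, hPp⟩ := Pb
    show eta q γ g x₀ ≤ eta q γ (fun y => g y - Pp y) x₀
    by_cases hcase : eta q γ (fun y => g y - Pp y) x₀ = ⊤
    · rw [hcase]; exact le_top
    · have hgm : Measurable fun y => g y - Pp y := hgmeas.sub hPp.measurable
      have hPfin : eta q γ Pp x₀ < ⊤ := by
        have hfe : (fun y => Pp y) = fun y => g y + (-(g y - Pp y)) := funext fun y => by ring
        have h1 : eta q γ Pp x₀ ≤ eta q γ g x₀ + eta q γ (fun y => -(g y - Pp y)) x₀ := by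
          rw [show eta q γ Pp x₀ = eta q γ (fun y => g y + (-(g y - Pp y))) x₀ by rw [← hfe]]
          exact eta_add_le hq.le hgmeas hgm.neg x₀
        rw [eta_neg] at h1
        exact lt_of_le_of_lt h1 (ENNReal.add_lt_top.2
          ⟨lt_top_iff_ne_top.2 hgfin, lt_top_iff_ne_top.2 hcase⟩)
      have hP0 : ∀ x : En n, Pp x = 0 := poly_eta_fin_zero hq hγ0 hPp x₀ hPfin
      have hfe2 : (fun y => g y - Pp y) = g := funext fun y => by rw [hP0 y]; ring
      rw [hfe2]


end
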